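/- arXiv:2509.17235 — 2 statements merged into one kernel-verified Lean document; each statement's English description precedes it below -/
import Mathlib

section
/- Let (Ω, P) be a probability space, k ≥ 2 an integer, and d > 0 a real number. Let B ⊆ Ω be a measurable set with P(B) > 0 and let d_t : Ω → ℝ be a measurable function with d_t(ω) > d for all ω ∈ B. Define L_1 = k·log(k) and L_2 = ∫_B [ log(k) + (k−1)·log(k − 1 + e^{−d_t(ω)²}) ] dP(ω) + (1 − P(B))·k·log(k). Then L_1 − L_2 > P(B)·(k−1)·log( k / (k − 1 + e^{−d²}) ) > 0. In particular the uniform graph case, in which every dynamic graph equals the static graph on every sample, is not an optimal (loss-minimizing) solution of the expected graph cohesion loss. -/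
/-! The per-sample loss `l₂(x) = log k + (k - 1) log (k - 1 + e^{-x²})` decreases strictly in `x²`
and equals `l₁ = k log k` at `x = 0`. Hence on `B`, where `d_t > d > 0`, the integrand lies strictly
below `l₂(d) < l₁`, and since `P(B) > 0` integrating gives
`L₁ - L₂ = P(B) l₁ - ∫_B l₂(d_t) > P(B) (l₁ - l₂(d))`, the last difference being
`(k - 1) log (k / (k - 1 + e^{-d²}))`. -/

open MeasureTheory Real

theorem setIntegral_lt_measureReal_mul_of_forall_lt {α : Type*} [MeasurableSpace α]
    {μ : Measure α} {s : Set α} (hs : MeasurableSet s) (hμs₀ : μ s ≠ 0) (hμs : μ s ≠ ⊤)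
    {f : α → ℝ} (hf : IntegrableOn f s μ) {c : ℝ} (hlt : ∀ x ∈ s, f x < c) :
    ∫ x in s, f x ∂μ < μ.real s * c := by
  have hc : IntegrableOn (fun _ => c) s μ := integrableOn_const hμs
  have hgap : 0 < ∫ x in s, (c - f x) ∂μ := by
    rw [setIntegral_pos_iff_support_of_nonneg_ae (f := fun x => c - f x) _ (hc.sub hf)]
    · refine (pos_iff_ne_zero.2 hμs₀).trans_le (measure_mono fun x hx => ?_)
      exact ⟨sub_ne_zero.2 (hlt x hx).ne', hx⟩
    · exact (ae_restrict_iff' hs).2 (.of_forall fun x hx => sub_nonneg.2 (hlt x hx).le)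
  rw [integral_sub hc hf, setIntegral_const, smul_eq_mul] at hgap
  linarith

/-- The graph cohesion loss `l₂(x)` of a sample with `k` dynamic graphs, one of which is at
Frobenius distance `x` from the static graph. -/
noncomputable def deviantCohesionLoss (k x : ℝ) : ℝ :=
  log k + (k - 1) * log (k - 1 + exp (-x ^ 2))

namespace deviantCohesionLoss

variable {k : ℝ}

lemma sub_one_add_exp_pos (hk : 1 ≤ k) (x : ℝ) : 0 < k - 1 + exp (-x ^ 2) := by
  have := exp_pos (-x ^ 2); linarith

lemma apply_zero (k : ℝ) : deviantCohesionLoss k 0 = k * log k := by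
  simp only [deviantCohesionLoss]; norm_num; ring

lemma measurable (k : ℝ) : Measurable (deviantCohesionLoss k) := by
  unfold deviantCohesionLoss
  fun_prop

lemma lt_of_sq_lt (hk : 1 < k) {x y : ℝ} (hxy : x ^ 2 < y ^ 2) :
    deviantCohesionLoss k y < deviantCohesionLoss k x := by
  have hexp : exp (-y ^ 2) < exp (-x ^ 2) := exp_lt_exp.2 (by linarith)
  have hlog : log (k - 1 + exp (-y ^ 2)) < log (k - 1 + exp (-x ^ 2)) :=
    log_lt_log (sub_one_add_exp_pos hk.le y) (by linarith)
  unfold deviantCohesionLoss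
  nlinarith

lemma le_of_sq_le (hk : 1 ≤ k) {x y : ℝ} (hxy : x ^ 2 ≤ y ^ 2) :
    deviantCohesionLoss k y ≤ deviantCohesionLoss k x := by
  have hexp : exp (-y ^ 2) ≤ exp (-x ^ 2) := exp_le_exp.2 (by linarith)
  have hlog : log (k - 1 + exp (-y ^ 2)) ≤ log (k - 1 + exp (-x ^ 2)) :=
    log_le_log (sub_one_add_exp_pos hk y) (by linarith)
  unfold deviantCohesionLoss
  nlinarith

lemma norm_le (hk : 2 ≤ k) (x : ℝ) : ‖deviantCohesionLoss k x‖ ≤ k * log k := by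
  have h1 : 0 ≤ log (k - 1 + exp (-x ^ 2)) := log_nonneg (by have := exp_pos (-x ^ 2); linarith)
  have h2 : 0 ≤ log k := log_nonneg (by linarith)
  rw [norm_of_nonneg (by unfold deviantCohesionLoss; nlinarith), ← apply_zero]
  exact le_of_sq_le (by linarith) (by simp [sq_nonneg])

lemma sub_eq_mul_log_div (hk : 1 ≤ k) (x : ℝ) :
    k * log k - deviantCohesionLoss k x = (k - 1) * log (k / (k - 1 + exp (-x ^ 2))) := by
  rw [log_div (by linarith) (sub_one_add_exp_pos hk x).ne', deviantCohesionLoss]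
  ring

end deviantCohesionLoss

/-- Comparison of the expected graph cohesion loss of the uniform graph case
(`L_1 = k·log k`) with the loss `L_2` of a model that has one dynamic graph at distance
`d_t(ω) > d` from the static graph on an event `B` of positive probability and is uniform
off `B`: `L_1 − L_2 > P(B)·(k−1)·log(k/(k−1+e^{−d²})) > 0`. Hence the uniform graph case is
not optimal. -/
theorem uniform_case_not_optimal_expected_loss
    {Ω : Type*} [MeasurableSpace Ω] (P : MeasureTheory.Measure Ω)
    [MeasureTheory.IsProbabilityMeasure P]
    (k : ℕ) (hk : 2 ≤ k) (d : ℝ) (hd : 0 < d)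
    (B : Set Ω) (hB : MeasurableSet B) (hPB : 0 < P B)
    (dt : Ω → ℝ) (hdt : Measurable dt) (hdtB : ∀ ω ∈ B, d < dt ω) :
    ((k : ℝ) * Real.log (k : ℝ)) -
        ((∫ ω in B, (Real.log (k : ℝ) +
            ((k : ℝ) - 1) * Real.log ((k : ℝ) - 1 + Real.exp (-(dt ω) ^ 2))) ∂P) +
          (1 - (P B).toReal) * ((k : ℝ) * Real.log (k : ℝ)))
      > (P B).toReal *
          (((k : ℝ) - 1) * Real.log ((k : ℝ) / ((k : ℝ) - 1 + Real.exp (-d ^ 2)))) ∧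
    0 < (P B).toReal *
          (((k : ℝ) - 1) * Real.log ((k : ℝ) / ((k : ℝ) - 1 + Real.exp (-d ^ 2)))) := by
  have hk2 : (2 : ℝ) ≤ k := by exact_mod_cast hk
  have hp : 0 < (P B).toReal := ENNReal.toReal_pos hPB.ne' (measure_ne_top P B)
  have hint : IntegrableOn (fun ω => deviantCohesionLoss k (dt ω)) B P :=
    Integrable.of_bound ((deviantCohesionLoss.measurable k).comp hdt).aestronglyMeasurable
      (k * log k) (.of_forall fun ω => deviantCohesionLoss.norm_le hk2 (dt ω))
  have hlt : ∫ ω in B, deviantCohesionLoss k (dt ω) ∂P < (P B).toReal * deviantCohesionLoss k d :=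
    setIntegral_lt_measureReal_mul_of_forall_lt hB hPB.ne' (measure_ne_top P B) hint
      fun ω hω => deviantCohesionLoss.lt_of_sq_lt (by linarith) (by nlinarith [hdtB ω hω])
  have hgap : 0 < k * log k - deviantCohesionLoss k d := by
    rw [sub_pos, ← deviantCohesionLoss.apply_zero]
    exact deviantCohesionLoss.lt_of_sq_lt (by linarith) (by simpa using pow_pos hd 2)
  rw [← deviantCohesionLoss.sub_eq_mul_log_div (by linarith)]
  refine ⟨?_, mul_pos hp hgap⟩
  unfold deviantCohesionLoss at hlt ⊢
  linarith
end

section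
/- Let N be a positive integer, k ≥ 2 an integer, and A_s any real N×N matrix. Then there exist real N×N matrices A_1, …, A_k such that the per-sample graph cohesion loss satisfies ℓ(A_s; A_1,…,A_k) < k·log(k); that is, the uniform configuration A_1 = … = A_k = A_s (whose loss is k·log k) is not a minimizer of the per-sample graph cohesion loss. -/
/-- Squared Frobenius norm of a real N×N matrix: `∑ i j, (A i j)^2`. -/
noncomputable def frobSq {N : ℕ} (A : Matrix (Fin N) (Fin N) ℝ) : ℝ :=
  ∑ i, ∑ j, (A i j) ^ 2

/-- Frobenius norm of a real N×N matrix. -/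
noncomputable def frobNorm {N : ℕ} (A : Matrix (Fin N) (Fin N) ℝ) : ℝ :=
  Real.sqrt (frobSq A)

/-- Similarity measure `h(X, Y) = exp(−‖X − Y‖_F²)` (temperature τ = 1). -/
noncomputable def hSim {N : ℕ} (X Y : Matrix (Fin N) (Fin N) ℝ) : ℝ :=
  Real.exp (-(frobNorm (X - Y)) ^ 2)

/-- Per-sample graph cohesion loss
`ℓ(A_s; A_1,…,A_k) = ∑_i −log( h(A_s,A_i) / (h(A_s,A_i) + ∑_{j≠i} h(A_i,A_j)) )`. -/
noncomputable def gcLoss {N k : ℕ} (As : Matrix (Fin N) (Fin N) ℝ)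
    (A : Fin k → Matrix (Fin N) (Fin N) ℝ) : ℝ :=
  ∑ i, -Real.log (hSim As (A i) /
    (hSim As (A i) + ∑ j ∈ Finset.univ.erase i, hSim (A i) (A j)))

/-!
Displace a single matrix `A i₀` to some `B ≠ A_s` and keep all others equal to `A_s`; put
`e = h(A_s, B) ∈ (0, 1)`. Every similarity entering the term of `i₀` equals `e`, so that term is
still `log k`, but each of the other `k - 1` terms drops to `log (k - 1 + e) < log k`.
-/

open Finset Real

lemma frobSq_nonneg {N : ℕ} (A : Matrix (Fin N) (Fin N) ℝ) : 0 ≤ frobSq A := by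
  unfold frobSq; positivity

lemma frobSq_pos {N : ℕ} {A : Matrix (Fin N) (Fin N) ℝ} (hA : A ≠ 0) : 0 < frobSq A := by
  obtain ⟨i, j, hij⟩ : ∃ i j, A i j ≠ 0 := by
    by_contra! h
    exact hA (Matrix.ext h)
  calc 0 < A i j ^ 2 := by positivity
    _ ≤ ∑ j', A i j' ^ 2 := single_le_sum (fun _ _ => sq_nonneg _) (mem_univ j)
    _ ≤ frobSq A :=
      single_le_sum (f := fun i => ∑ j, A i j ^ 2) (fun _ _ => by positivity) (mem_univ i)

lemma frobSq_neg {N : ℕ} (A : Matrix (Fin N) (Fin N) ℝ) : frobSq (-A) = frobSq A := by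
  simp [frobSq]

section hSim

variable {N : ℕ}

lemma hSim_eq_exp (X Y : Matrix (Fin N) (Fin N) ℝ) : hSim X Y = exp (-frobSq (X - Y)) := by
  rw [hSim, frobNorm, sq_sqrt (frobSq_nonneg _)]

lemma hSim_pos (X Y : Matrix (Fin N) (Fin N) ℝ) : 0 < hSim X Y :=
  exp_pos _

lemma hSim_comm (X Y : Matrix (Fin N) (Fin N) ℝ) : hSim X Y = hSim Y X := by
  rw [hSim_eq_exp, hSim_eq_exp, ← neg_sub, frobSq_neg]

@[simp]
lemma hSim_self (X : Matrix (Fin N) (Fin N) ℝ) : hSim X X = 1 := by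
  simp [hSim_eq_exp, frobSq]

lemma hSim_lt_one {X Y : Matrix (Fin N) (Fin N) ℝ} (h : X ≠ Y) : hSim X Y < 1 := by
  rw [hSim_eq_exp, exp_lt_one_iff, neg_lt_zero]
  exact frobSq_pos (sub_ne_zero.mpr h)

end hSim

lemma gcLoss_eq_sum_log {N k : ℕ} (As : Matrix (Fin N) (Fin N) ℝ)
    (A : Fin k → Matrix (Fin N) (Fin N) ℝ) :
    gcLoss As A =
      ∑ i, log ((hSim As (A i) + (∑ j, hSim (A i) (A j) - 1)) / hSim As (A i)) := by
  refine sum_congr rfl fun i _ => ?_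
  rw [sum_erase_eq_sub (mem_univ i), hSim_self, ← log_inv, inv_div]

lemma sum_comp_update_const {ι M R : Type*} [Fintype ι] [DecidableEq ι] [CommRing R]
    (g : M → R) (a b : M) (i₀ : ι) :
    ∑ i, g (Function.update (fun _ => a) i₀ b i) = g b + (Fintype.card ι - 1) * g a := by
  have hcard : 1 ≤ Fintype.card ι := Fintype.card_pos_iff.mpr ⟨i₀⟩
  simp_rw [Function.apply_update (fun _ => g)]
  rw [sum_update_of_mem (mem_univ i₀), sum_const, card_sdiff, nsmul_eq_mul]
  simp [Nat.cast_sub hcard]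

lemma gcLoss_update_const {N k : ℕ} (As B : Matrix (Fin N) (Fin N) ℝ) (i₀ : Fin k) :
    gcLoss As (Function.update (fun _ => As) i₀ B) =
      log k + (k - 1) * log (k - 1 + hSim As B) := by
  set A := Function.update (fun _ => As) i₀ B
  set e := hSim As B
  have hrow (X : Matrix (Fin N) (Fin N) ℝ) :
      ∑ j, hSim X (A j) = hSim X B + (k - 1) * hSim X As := by
    simpa using sum_comp_update_const (hSim X) As B i₀
  have hB : (e + (∑ j, hSim B (A j) - 1)) / e = k := by
    have : e ≠ 0 := (hSim_pos As B).ne'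
    rw [hrow, hSim_self, hSim_comm B As]
    field_simp
    ring
  have hAs : (hSim As As + (∑ j, hSim As (A j) - 1)) / hSim As As = k - 1 + e := by
    rw [hrow, hSim_self]
    ring
  rw [gcLoss_eq_sum_log, sum_comp_update_const
    (fun X => log ((hSim As X + (∑ j, hSim X (A j) - 1)) / hSim As X)) As B i₀, hB, hAs,
    Fintype.card_fin]

lemma log_add_mul_log_lt {k e : ℝ} (hk : 1 < k) (he₀ : 0 < e) (he₁ : e < 1) :
    log k + (k - 1) * log (k - 1 + e) < k * log k := by
  have hlog : log (k - 1 + e) < log k := log_lt_log (by linarith) (by linarith)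
  linarith [mul_lt_mul_of_pos_left hlog (sub_pos.mpr hk)]

/-- For any static graph `A_s` there exist dynamic graphs `A_1,…,A_k` whose
per-sample graph cohesion loss is strictly below `k·log k`; hence the uniform configuration
`A_1 = … = A_k = A_s` (whose loss is `k·log k`) is not a minimizer. -/
theorem uniform_configuration_not_minimizer
    {N k : ℕ} (hN : 0 < N) (hk : 2 ≤ k)
    (As : Matrix (Fin N) (Fin N) ℝ) :
    ∃ A : Fin k → Matrix (Fin N) (Fin N) ℝ,
      gcLoss As A < (k : ℝ) * Real.log (k : ℝ) := by
  have : NeZero N := ⟨hN.ne'⟩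
  obtain ⟨B, hB⟩ := exists_ne As
  refine ⟨Function.update (fun _ => As) ⟨0, by omega⟩ B, ?_⟩
  rw [gcLoss_update_const]
  exact log_add_mul_log_lt (by exact_mod_cast hk) (hSim_pos As B) (hSim_lt_one hB.symm)
end
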